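/- Fix c₀ ≠ 0 and let 𝔥 ∈ C¹([−1, 1]) be positive, even (𝔥(−t) = 𝔥(t) for all t), and increasing on [0, 1]. Then the set Γ₁ := {(x, y) ∈ (0, ∞) × (−1, 1) : F₁(x, y) = 0} is connected; it is a regular curve with endpoints p₁ and −p₁, symmetric with respect to the axis y = 0, and it divides the phase space Θ₁ into exactly two regions, one bounded region Λ₀ adjacent to the axis x = 0 and one unbounded region Λ_∞. -/

import Mathlib

/-- The function `F₁` whose zero set in the phase space `Θ₁ = (0,∞) × (−1,1)`
is the nullcline `Γ₁`. -/
noncomputable def helicoidalF1 (c₀ : ℝ) (𝔥 : ℝ → ℝ) (p : ℝ × ℝ) : ℝ :=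
  2 * 𝔥 (p.1 * p.2 / Real.sqrt (c₀ ^ 2 * p.2 ^ 2 + p.1 ^ 2))
      * (p.1 ^ 2 + c₀ ^ 2 * p.2 ^ 2) ^ ((3 : ℝ) / 2)
    - (p.1 ^ 2 + 2 * c₀ ^ 2 * p.2 ^ 2) * Real.sqrt (1 - p.2 ^ 2)

/-!
With `r = √(c₀²y² + x²)` one has `F₁ = r³ G`, where
`G(x, y) = 2𝔥(xy/r) − √(1 − y²) (1/r + c₀²y²/r³)`. For fixed `y` the function `G(·, y)` is
strictly increasing (the even function `𝔥`, monotone on `[0, 1]`, is evaluated at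
`|xy/r|`, which grows with `x`, while `1/r + c₀²y²/r³` decreases) and positive for large `x`.
So every horizontal line `y = const` meets `{F₁ < 0}` in an interval `(0, g y)` and `{F₁ > 0}`
in `(g y, ∞)`, with `g y > 0` exactly when `F₁(0, y) < 0`, i.e. when
`|y| < y₁ = 1/√(1 + c₀²𝔥(0)²)`. The threshold `g` is continuous and vanishes at `±y₁`, and
`Γ₁`, `Λ₀ = {F₁ < 0}`, `Λ_∞ = {F₁ > 0}` are the continuous images of its graph over
`(−y₁, y₁)`, of the region between the axis and the graph, and of the region to the right
of it. At a point of `Γ₁` the same monotonicity gives `F₁(x + t, y) ≥ x √(1 − y²) t` for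
`t ≥ 0`, so `∂ₓF₁ > 0` there.
-/

open Set Topology

theorem one_div_sqrt_one_add_lt_one {a : ℝ} (ha : 0 < a) : 1 / √(1 + a) < 1 := by
  rw [div_lt_one (by positivity), Real.lt_sqrt zero_le_one]
  linarith

theorem abs_lt_one_div_sqrt_iff (a y : ℝ) :
    |y| < 1 / √(1 + a ^ 2) ↔ |a * y| < √(1 - y ^ 2) := by
  rw [lt_div_iff₀ (by positivity), Real.lt_sqrt (abs_nonneg _), ← Real.sqrt_sq_eq_abs,
    ← Real.sqrt_mul (sq_nonneg y), Real.sqrt_lt' one_pos, sq_abs]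
  constructor <;> intro h <;> nlinarith

theorem apply_abs_of_evenOn {f : ℝ → ℝ} (heven : ∀ t ∈ Icc (-1 : ℝ) 1, f (-t) = f t) {t : ℝ}
    (ht : |t| ≤ 1) : f |t| = f t := by
  rcases abs_choice t with h | h <;> rw [h]
  exact heven t (abs_le.1 ht)

theorem apply_le_apply_of_abs_le {f : ℝ → ℝ} (heven : ∀ t ∈ Icc (-1 : ℝ) 1, f (-t) = f t)
    (hmono : MonotoneOn f (Icc 0 1)) {s t : ℝ} (hst : |s| ≤ |t|) (ht : |t| ≤ 1) :
    f s ≤ f t := by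
  rw [← apply_abs_of_evenOn heven (hst.trans ht), ← apply_abs_of_evenOn heven ht]
  exact hmono ⟨abs_nonneg s, hst.trans ht⟩ ⟨abs_nonneg t, ht⟩ hst

theorem div_sqrt_add_sq_le_div_sqrt_add_sq {a x₁ x₂ : ℝ} (ha : 0 ≤ a) (hx₁ : 0 ≤ x₁)
    (hx : x₁ ≤ x₂) : x₁ / √(a + x₁ ^ 2) ≤ x₂ / √(a + x₂ ^ 2) := by
  rcases hx₁.eq_or_lt with rfl | hx₁
  · simp only [zero_div]; positivity
  have hx₂ : 0 < x₂ := hx₁.trans_le hx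
  rw [div_le_div_iff₀ (by positivity) (by positivity)]
  refine le_of_pow_le_pow_left₀ two_ne_zero (by positivity) ?_
  rw [mul_pow, mul_pow, Real.sq_sqrt (by positivity), Real.sq_sqrt (by positivity)]
  nlinarith [mul_le_mul hx hx hx₁.le hx₂.le]

theorem HasLineDerivAt.le_of_forall_mul_le {E : Type*} [AddCommGroup E] [Module ℝ E]
    {f : E → ℝ} {f' k : ℝ} {x v : E} (hf : HasLineDerivAt ℝ f f' x v)
    (h : ∀ t, 0 < t → k * t ≤ f (x + t • v) - f x) : k ≤ f' :=
  ge_of_tendsto hf.tendsto_slope_zero_right <| eventually_nhdsWithin_of_forall fun t ht =>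
    (le_inv_mul_iff₀ ht).2 (mul_comm t k ▸ h t ht)

def IsSignThreshold (φ : ℝ → ℝ) (x₀ : ℝ) : Prop :=
  0 ≤ x₀ ∧ ∀ x, 0 < x → (φ x < 0 ↔ x < x₀) ∧ (0 < φ x ↔ x₀ < x)

namespace IsSignThreshold

variable {φ : ℝ → ℝ} {x₀ : ℝ}

theorem eq_zero_iff (h : IsSignThreshold φ x₀) {x : ℝ} (hx : 0 < x) : φ x = 0 ↔ x = x₀ := by
  obtain ⟨hneg, hpos⟩ := h.2 x hx
  rcases lt_trichotomy x x₀ with hlt | rfl | hgt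
  · exact iff_of_false (hneg.2 hlt).ne hlt.ne
  · exact iff_of_true (le_antisymm (not_lt.1 (mt hpos.1 (lt_irrefl x)))
      (not_lt.1 (mt hneg.1 (lt_irrefl x)))) rfl
  · exact iff_of_false (hpos.2 hgt).ne' hgt.ne'

theorem pos_iff (h : IsSignThreshold φ x₀) : 0 < x₀ ↔ ∃ x, 0 < x ∧ φ x < 0 :=
  ⟨fun hx₀ => ⟨x₀ / 2, half_pos hx₀, (h.2 _ (half_pos hx₀)).1.2 (half_lt_self hx₀)⟩,
    fun ⟨x, hx, hφ⟩ => hx.trans ((h.2 x hx).1.1 hφ)⟩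

theorem mul_left {c : ℝ → ℝ} (h : IsSignThreshold φ x₀) (hc : ∀ x, 0 < x → 0 < c x) :
    IsSignThreshold (fun x => c x * φ x) x₀ := by
  refine ⟨h.1, fun x hx => ?_⟩
  rw [← (h.2 x hx).1, ← (h.2 x hx).2]
  exact ⟨smul_neg_iff_of_pos_left (hc x hx), smul_pos_iff_of_pos_left (hc x hx)⟩

end IsSignThreshold

theorem StrictMonoOn.exists_isSignThreshold {φ : ℝ → ℝ} (hcont : ContinuousOn φ (Ioi 0))
    (hmono : StrictMonoOn φ (Ioi 0)) {b : ℝ} (hb : 0 < b) (hφb : 0 < φ b) :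
    ∃ x₀, IsSignThreshold φ x₀ := by
  by_cases hneg : ∃ a, 0 < a ∧ φ a < 0
  · obtain ⟨a, ha, hφa⟩ := hneg
    have hab : a < b := (hmono.lt_iff_lt ha hb).1 (hφa.trans hφb)
    obtain ⟨x₀, hx₀, hφx₀⟩ := intermediate_value_Ioo hab.le
      (hcont.mono fun x hx => ha.trans_le hx.1) ⟨hφa, hφb⟩
    have hx₀pos : 0 < x₀ := ha.trans hx₀.1
    refine ⟨x₀, hx₀pos.le, fun x hx => ?_⟩
    rw [← hφx₀]
    exact ⟨hmono.lt_iff_lt hx hx₀pos, hmono.lt_iff_lt hx₀pos hx⟩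
  · push Not at hneg
    refine ⟨0, le_rfl, fun x hx => ⟨iff_of_false (hneg x hx).not_gt hx.not_gt, iff_of_true ?_ hx⟩⟩
    exact (hneg _ (half_pos hx)).trans_lt (hmono (half_pos hx) hx (half_lt_self hx))

theorem diff_setOf_eq_zero {α : Type*} (S : Set α) (Φ : α → ℝ) :
    S \ {p | p ∈ S ∧ Φ p = 0} = {p | p ∈ S ∧ Φ p < 0} ∪ {p | p ∈ S ∧ 0 < Φ p} := by
  ext p
  simp only [mem_sdiff, mem_union, mem_ofPred_eq, not_and, ← and_or_left, lt_or_lt_iff_ne]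
  exact ⟨fun ⟨hp, h⟩ => ⟨hp, h hp⟩, fun ⟨hp, h⟩ => ⟨hp, fun _ => h⟩⟩

def IsSignThresholdOn (Φ : ℝ × ℝ → ℝ) (I : Set ℝ) (g : ℝ → ℝ) : Prop :=
  ∀ y ∈ I, IsSignThreshold (fun x => Φ (x, y)) (g y)

namespace IsSignThresholdOn

variable {Φ : ℝ × ℝ → ℝ} {I : Set ℝ} {g : ℝ → ℝ}

theorem continuousOn (hg : IsSignThresholdOn Φ I g) (hI : IsOpen I)
    (hΦ : ContinuousOn Φ (Ioi 0 ×ˢ I)) : ContinuousOn g I := by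
  intro y₀ hy₀
  have hslice : ∀ x, 0 < x → ContinuousAt (fun y => Φ (x, y)) y₀ := fun x hx =>
    (hΦ.continuousAt (prod_mem_nhds (Ioi_mem_nhds hx) (hI.mem_nhds hy₀))).comp
      (continuous_const.prodMk continuous_id).continuousAt
  refine ContinuousAt.continuousWithinAt (tendsto_order.2 ⟨fun a ha => ?_, fun b hb => ?_⟩)
  · rcases lt_or_ge a 0 with ha0 | ha0
    · filter_upwards [hI.mem_nhds hy₀] with y hy
      exact ha0.trans_le (hg y hy).1
    obtain ⟨b, hab, hb⟩ := exists_between ha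
    have hb0 : 0 < b := ha0.trans_lt hab
    have hΦb : Φ (b, y₀) < 0 := ((hg y₀ hy₀).2 b hb0).1.2 hb
    filter_upwards [hI.mem_nhds hy₀, hslice b hb0 (Iio_mem_nhds hΦb)] with y hy hΦy
    exact hab.trans (((hg y hy).2 b hb0).1.1 hΦy)
  · have hb0 : 0 < b := (hg y₀ hy₀).1.trans_lt hb
    have hΦb : 0 < Φ (b, y₀) := ((hg y₀ hy₀).2 b hb0).2.2 hb
    filter_upwards [hI.mem_nhds hy₀, hslice b hb0 (Ioi_mem_nhds hΦb)] with y hy hΦy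
    exact ((hg y hy).2 b hb0).2.1 hΦy

theorem setOf_eq_zero_eq_image (hg : IsSignThresholdOn Φ I g) :
    {p | p ∈ Ioi 0 ×ˢ I ∧ Φ p = 0} = (fun y => (g y, y)) '' {y ∈ I | 0 < g y} := by
  ext ⟨x, y⟩
  simp only [mem_ofPred_eq, mem_prod, mem_Ioi, mem_image, Prod.mk.injEq]
  constructor
  · rintro ⟨⟨hx, hy⟩, hΦ⟩
    have hxg := ((hg y hy).eq_zero_iff hx).1 hΦ
    exact ⟨y, ⟨hy, hxg ▸ hx⟩, hxg.symm, rfl⟩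
  · rintro ⟨y, ⟨hy, hgy⟩, rfl, rfl⟩
    exact ⟨⟨hgy, hy⟩, ((hg y hy).eq_zero_iff hgy).2 rfl⟩

theorem setOf_neg_eq_image (hg : IsSignThresholdOn Φ I g) :
    {p | p ∈ Ioi 0 ×ˢ I ∧ Φ p < 0} =
      (fun q => (q.1 * g q.2, q.2)) '' (Ioo 0 1 ×ˢ {y ∈ I | 0 < g y}) := by
  ext ⟨x, y⟩
  simp only [mem_ofPred_eq, mem_prod, mem_Ioi, mem_Ioo, mem_image, Prod.exists, Prod.mk.injEq]
  constructor
  · rintro ⟨⟨hx, hy⟩, hΦ⟩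
    have hxg := ((hg y hy).2 x hx).1.1 hΦ
    have hgy := hx.trans hxg
    exact ⟨x / g y, y, ⟨⟨div_pos hx hgy, (div_lt_one hgy).2 hxg⟩, hy, hgy⟩,
      div_mul_cancel₀ x hgy.ne', rfl⟩
  · rintro ⟨t, y, ⟨⟨ht0, ht1⟩, hy, hgy⟩, rfl, rfl⟩
    have htg : 0 < t * g y := mul_pos ht0 hgy
    exact ⟨⟨htg, hy⟩, ((hg y hy).2 _ htg).1.2 (mul_lt_of_lt_one_left hgy ht1)⟩

theorem setOf_pos_eq_image (hg : IsSignThresholdOn Φ I g) :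
    {p | p ∈ Ioi 0 ×ˢ I ∧ 0 < Φ p} = (fun q => (g q.2 + q.1, q.2)) '' (Ioi 0 ×ˢ I) := by
  ext ⟨x, y⟩
  simp only [mem_ofPred_eq, mem_prod, mem_Ioi, mem_image, Prod.exists, Prod.mk.injEq]
  constructor
  · rintro ⟨⟨hx, hy⟩, hΦ⟩
    exact ⟨x - g y, y, ⟨sub_pos.2 (((hg y hy).2 x hx).2.1 hΦ), hy⟩, add_sub_cancel _ _, rfl⟩
  · rintro ⟨s, y, ⟨hs, hy⟩, rfl, rfl⟩
    have hpos : 0 < g y + s := add_pos_of_nonneg_of_pos (hg y hy).1 hs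
    exact ⟨⟨hpos, hy⟩, ((hg y hy).2 _ hpos).2.2 (lt_add_of_pos_right _ hs)⟩

theorem isConnected_setOf_eq_zero (hg : IsSignThresholdOn Φ I g) (hgc : ContinuousOn g I)
    (hD : IsConnected {y ∈ I | 0 < g y}) : IsConnected {p | p ∈ Ioi 0 ×ˢ I ∧ Φ p = 0} := by
  rw [hg.setOf_eq_zero_eq_image]
  exact hD.image _ ((hgc.mono fun _ hy => hy.1).prodMk continuousOn_id)

theorem isConnected_setOf_neg (hg : IsSignThresholdOn Φ I g) (hgc : ContinuousOn g I)
    (hD : IsConnected {y ∈ I | 0 < g y}) : IsConnected {p | p ∈ Ioi 0 ×ˢ I ∧ Φ p < 0} := by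
  rw [hg.setOf_neg_eq_image]
  refine ((isConnected_Ioo zero_lt_one).prod hD).image _ ?_
  exact (continuousOn_fst.mul (hgc.comp continuousOn_snd fun _ hq => hq.2.1)).prodMk
    continuousOn_snd

theorem isConnected_setOf_pos (hg : IsSignThresholdOn Φ I g) (hgc : ContinuousOn g I)
    (hI : IsConnected I) : IsConnected {p | p ∈ Ioi 0 ×ˢ I ∧ 0 < Φ p} := by
  rw [hg.setOf_pos_eq_image]
  refine ((isConnected_Ioi (a := (0 : ℝ))).prod hI).image _ ?_
  exact ((hgc.comp continuousOn_snd fun _ hq => hq.2).add continuousOn_fst).prodMk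
    continuousOn_snd

theorem isBounded_setOf_neg (hg : IsSignThresholdOn Φ I g) (hgc : ContinuousOn g I)
    {K : Set ℝ} (hK : IsCompact K) (hKI : K ⊆ I) (hDK : {y ∈ I | 0 < g y} ⊆ K) :
    Bornology.IsBounded {p | p ∈ Ioi 0 ×ˢ I ∧ Φ p < 0} := by
  rw [hg.setOf_neg_eq_image]
  refine ((isCompact_Icc.prod hK).image_of_continuousOn ?_).isBounded.subset
    (image_mono (prod_mono Ioo_subset_Icc_self hDK))
  exact (continuousOn_fst.mul ((hgc.mono hKI).comp continuousOn_snd fun _ hq => hq.2)).prodMk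
    continuousOn_snd

theorem not_isBounded_setOf_pos (hg : IsSignThresholdOn Φ I g) {y : ℝ} (hy : y ∈ I) :
    ¬ Bornology.IsBounded {p | p ∈ Ioi 0 ×ˢ I ∧ 0 < Φ p} := fun hb =>
  not_bddAbove_Ioi (g y) <| (hb.image_fst.subset fun x hx =>
    have hx0 : 0 < x := (hg y hy).1.trans_lt hx
    ⟨(x, y), ⟨⟨hx0, hy⟩, ((hg y hy).2 x hx0).2.2 hx⟩, rfl⟩).bddAbove

theorem mem_closure_setOf_neg (hg : IsSignThresholdOn Φ I g) {y : ℝ} (hy : y ∈ I)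
    (hgy : 0 < g y) :
    ((0 : ℝ), y) ∈ closure {p | p ∈ Ioi 0 ×ˢ I ∧ Φ p < 0} := by
  refine closure_mono ?_ (mem_closure_image (f := fun x : ℝ => (x, y)) (by fun_prop)
    ((closure_Ioo hgy.ne).symm ▸ left_mem_Icc.2 hgy.le))
  rintro _ ⟨x, hx, rfl⟩
  exact ⟨⟨hx.1, hy⟩, ((hg y hy).2 x hx.1).1.2 hx.2⟩

theorem closure_setOf_eq_zero (hg : IsSignThresholdOn Φ I g) (hgc : ContinuousOn g I)
    {a b : ℝ} (hab : a < b) (hI : Icc a b ⊆ I) (hD : {y ∈ I | 0 < g y} = Ioo a b) :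
    closure {p | p ∈ Ioi 0 ×ˢ I ∧ Φ p = 0} =
      {p | p ∈ Ioi 0 ×ˢ I ∧ Φ p = 0} ∪ {((0 : ℝ), a), (0, b)} := by
  have hzero : ∀ y ∈ ({a, b} : Set ℝ), g y = 0 := by
    rintro y hy
    have hyI : y ∈ I := hI (Ioo_union_both hab.le ▸ Or.inr hy)
    have hyD : y ∉ Ioo a b := by rcases hy with rfl | rfl <;> simp
    rw [← hD] at hyD
    exact le_antisymm (not_lt.1 fun h => hyD ⟨hyI, h⟩) (hg y hyI).1
  rw [hg.setOf_eq_zero_eq_image, hD, ← image_closure_of_isCompact, closure_Ioo hab.ne,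
    ← Ioo_union_both hab.le, image_union, image_pair, hzero a (by simp), hzero b (by simp)]
  · exact closure_Ioo hab.ne ▸ isCompact_Icc
  · exact closure_Ioo hab.ne ▸ (hgc.mono hI).prodMk continuousOn_id

end IsSignThresholdOn

namespace Helicoidal

noncomputable def radius (c₀ : ℝ) (p : ℝ × ℝ) : ℝ := √(c₀ ^ 2 * p.2 ^ 2 + p.1 ^ 2)

noncomputable def normalizedF1 (c₀ : ℝ) (𝔥 : ℝ → ℝ) (p : ℝ × ℝ) : ℝ :=
  2 * 𝔥 (p.1 * p.2 / radius c₀ p)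
    - √(1 - p.2 ^ 2) * (radius c₀ p ^ 2 + c₀ ^ 2 * p.2 ^ 2) / radius c₀ p ^ 3

variable {c₀ : ℝ} {𝔥 : ℝ → ℝ}

theorem radius_sq (c₀ : ℝ) (p : ℝ × ℝ) : radius c₀ p ^ 2 = c₀ ^ 2 * p.2 ^ 2 + p.1 ^ 2 :=
  Real.sq_sqrt (by positivity)

theorem radius_nonneg (c₀ : ℝ) (p : ℝ × ℝ) : 0 ≤ radius c₀ p := Real.sqrt_nonneg _

theorem abs_fst_le_radius (c₀ : ℝ) (p : ℝ × ℝ) : |p.1| ≤ radius c₀ p := by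
  rw [← Real.sqrt_sq_eq_abs]
  exact Real.sqrt_le_sqrt (by nlinarith [sq_nonneg (c₀ * p.2)])

theorem radius_pos {x y : ℝ} (hx : 0 < x) : 0 < radius c₀ (x, y) :=
  hx.trans_le ((le_abs_self _).trans (abs_fst_le_radius c₀ (x, y)))

theorem abs_mul_div_radius_le (c₀ : ℝ) (p : ℝ × ℝ) : |p.1 * p.2 / radius c₀ p| ≤ |p.2| := by
  rcases (radius_nonneg c₀ p).eq_or_lt with h | h
  · simp [← h]
  rw [abs_div, abs_mul, abs_of_pos h, div_le_iff₀ h, mul_comm]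
  exact mul_le_mul_of_nonneg_left (abs_fst_le_radius c₀ p) (abs_nonneg _)

theorem radius_lt_radius {x₁ x₂ y : ℝ} (hx₁ : 0 ≤ x₁) (hx : x₁ < x₂) :
    radius c₀ (x₁, y) < radius c₀ (x₂, y) :=
  Real.sqrt_lt_sqrt (by positivity) (by simp only; nlinarith)

theorem rpow_three_halves_eq_radius_pow (c₀ : ℝ) (p : ℝ × ℝ) :
    (p.1 ^ 2 + c₀ ^ 2 * p.2 ^ 2) ^ ((3 : ℝ) / 2) = radius c₀ p ^ 3 := by
  rw [radius, Real.sqrt_eq_rpow, ← Real.rpow_mul_natCast (by positivity), add_comm]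
  norm_num

theorem helicoidalF1_eq (c₀ : ℝ) (𝔥 : ℝ → ℝ) (p : ℝ × ℝ) :
    helicoidalF1 c₀ 𝔥 p = radius c₀ p ^ 3 * normalizedF1 c₀ 𝔥 p := by
  have hsq := radius_sq c₀ p
  rw [helicoidalF1, ← radius, rpow_three_halves_eq_radius_pow, normalizedF1, mul_sub]
  rcases (radius_nonneg c₀ p).eq_or_lt with h | h
  · have h₁ : p.1 = 0 := by nlinarith [sq_nonneg (c₀ * p.2), sq_nonneg p.1]
    have h₂ : c₀ ^ 2 * p.2 ^ 2 = 0 := by nlinarith [sq_nonneg (c₀ * p.2), sq_nonneg p.1]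
    simp [← h, h₁, mul_assoc, h₂]
  · rw [mul_div_cancel₀ _ (pow_ne_zero 3 h.ne'), hsq]
    ring

theorem radius_le_radius {x₁ x₂ y : ℝ} (hx₁ : 0 ≤ x₁) (hx : x₁ ≤ x₂) :
    radius c₀ (x₁, y) ≤ radius c₀ (x₂, y) :=
  Real.sqrt_le_sqrt (by simp only; nlinarith)

theorem abs_mul_div_radius_le_abs_mul_div_radius {x₁ x₂ y : ℝ} (hx₁ : 0 ≤ x₁) (hx : x₁ ≤ x₂) :
    |x₁ * y / radius c₀ (x₁, y)| ≤ |x₂ * y / radius c₀ (x₂, y)| := by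
  have key : ∀ x, 0 ≤ x → |x * y / radius c₀ (x, y)| = |y| * (x / √(c₀ ^ 2 * y ^ 2 + x ^ 2)) :=
    fun x hx => by
      rw [abs_div, abs_mul, abs_of_nonneg hx, abs_of_nonneg (radius_nonneg _ _), radius]
      ring
  rw [key x₁ hx₁, key x₂ (hx₁.trans hx)]
  exact mul_le_mul_of_nonneg_left
    (div_sqrt_add_sq_le_div_sqrt_add_sq (by positivity) hx₁ hx) (abs_nonneg y)

theorem normalizedF1_eq_of_pos {p : ℝ × ℝ} (hr : 0 < radius c₀ p) :
    normalizedF1 c₀ 𝔥 p = 2 * 𝔥 (p.1 * p.2 / radius c₀ p)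
      - √(1 - p.2 ^ 2) * (1 / radius c₀ p + c₀ ^ 2 * p.2 ^ 2 / radius c₀ p ^ 3) := by
  rw [normalizedF1]
  field_simp

theorem normalizedF1_sub_ge (heven : ∀ t ∈ Icc (-1 : ℝ) 1, 𝔥 (-t) = 𝔥 t)
    (hmono : MonotoneOn 𝔥 (Icc 0 1)) {x₁ x₂ y : ℝ} (hy : |y| ≤ 1) (hx₁ : 0 ≤ x₁)
    (hx : x₁ ≤ x₂) (hr : 0 < radius c₀ (x₁, y)) :
    √(1 - y ^ 2) * (1 / radius c₀ (x₁, y) - 1 / radius c₀ (x₂, y)) ≤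
      normalizedF1 c₀ 𝔥 (x₂, y) - normalizedF1 c₀ 𝔥 (x₁, y) := by
  have h𝔥 : 𝔥 (x₁ * y / radius c₀ (x₁, y)) ≤ 𝔥 (x₂ * y / radius c₀ (x₂, y)) :=
    apply_le_apply_of_abs_le heven hmono (abs_mul_div_radius_le_abs_mul_div_radius hx₁ hx)
      ((abs_mul_div_radius_le c₀ (x₂, y)).trans hy)
  have hr₂ : radius c₀ (x₁, y) ≤ radius c₀ (x₂, y) := radius_le_radius hx₁ hx
  have hcube :
      c₀ ^ 2 * y ^ 2 / radius c₀ (x₂, y) ^ 3 ≤ c₀ ^ 2 * y ^ 2 / radius c₀ (x₁, y) ^ 3 := by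
    gcongr
  rw [normalizedF1_eq_of_pos hr, normalizedF1_eq_of_pos (hr.trans_le hr₂)]
  nlinarith [mul_le_mul_of_nonneg_left hcube (Real.sqrt_nonneg (1 - y ^ 2))]

theorem normalizedF1_lt_normalizedF1 (heven : ∀ t ∈ Icc (-1 : ℝ) 1, 𝔥 (-t) = 𝔥 t)
    (hmono : MonotoneOn 𝔥 (Icc 0 1)) {x₁ x₂ y : ℝ} (hy : |y| < 1) (hx₁ : 0 ≤ x₁)
    (hx : x₁ < x₂) (hr : 0 < radius c₀ (x₁, y)) :
    normalizedF1 c₀ 𝔥 (x₁, y) < normalizedF1 c₀ 𝔥 (x₂, y) := by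
  have hs : 0 < √(1 - y ^ 2) := Real.sqrt_pos.2 (by nlinarith [abs_mul_abs_self y, abs_nonneg y])
  have hinv : 1 / radius c₀ (x₂, y) < 1 / radius c₀ (x₁, y) :=
    one_div_lt_one_div_of_lt hr (radius_lt_radius hx₁ hx)
  linarith [normalizedF1_sub_ge heven hmono hy.le hx₁ hx.le hr, mul_pos hs (sub_pos.2 hinv)]

theorem normalizedF1_pos (heven : ∀ t ∈ Icc (-1 : ℝ) 1, 𝔥 (-t) = 𝔥 t)
    (hmono : MonotoneOn 𝔥 (Icc 0 1)) {x y : ℝ} (hy : |y| ≤ 1) (hx : 0 < x)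
    (hx𝔥 : 1 < 𝔥 0 * x) : 0 < normalizedF1 c₀ 𝔥 (x, y) := by
  have hxr : x ≤ radius c₀ (x, y) := (le_abs_self x).trans (abs_fst_le_radius c₀ (x, y))
  have hr : 0 < radius c₀ (x, y) := hx.trans_le hxr
  have h𝔥 : 𝔥 0 ≤ 𝔥 (x * y / radius c₀ (x, y)) := apply_le_apply_of_abs_le heven hmono
    (by simp) ((abs_mul_div_radius_le c₀ (x, y)).trans hy)
  have hcube : c₀ ^ 2 * y ^ 2 / radius c₀ (x, y) ^ 3 ≤ 1 / radius c₀ (x, y) := by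
    rw [div_le_div_iff₀ (by positivity) hr]
    nlinarith [radius_sq c₀ (x, y), sq_nonneg x]
  have hinv : 1 / radius c₀ (x, y) ≤ 1 / x := one_div_le_one_div_of_le hx hxr
  have hs : √(1 - y ^ 2) ≤ 1 := Real.sqrt_le_one.2 (by nlinarith [sq_nonneg y])
  have hsum : √(1 - y ^ 2) * (1 / radius c₀ (x, y) + c₀ ^ 2 * y ^ 2 / radius c₀ (x, y) ^ 3)
      ≤ 2 / x := by
    calc _ ≤ 1 * (1 / x + 1 / x) :=
          mul_le_mul hs (add_le_add hinv (hcube.trans hinv)) (by positivity) zero_le_one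
      _ = 2 / x := by ring
  have h2x : 2 / x < 2 * 𝔥 0 := by rw [div_lt_iff₀ hx]; linarith
  rw [normalizedF1_eq_of_pos hr]
  linarith

theorem differentiableAt_radius {p : ℝ × ℝ} (hr : radius c₀ p ≠ 0) :
    DifferentiableAt ℝ (radius c₀) p := by
  refine DifferentiableAt.sqrt (by fun_prop) ?_
  rw [← radius_sq]
  exact pow_ne_zero 2 hr

theorem differentiableAt_normalizedF1 (hC1 : ContDiffOn ℝ 1 𝔥 (Icc (-1) 1)) {p : ℝ × ℝ}
    (hr : radius c₀ p ≠ 0) (hy : |p.2| < 1) : DifferentiableAt ℝ (normalizedF1 c₀ 𝔥) p := by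
  have hradius := differentiableAt_radius hr
  have hu := (abs_mul_div_radius_le c₀ p).trans_lt hy
  have h𝔥 : DifferentiableAt ℝ 𝔥 (p.1 * p.2 / radius c₀ p) :=
    (hC1.contDiffAt (Icc_mem_nhds (abs_lt.1 hu).1 (abs_lt.1 hu).2)).differentiableAt one_ne_zero
  have hsqrt : DifferentiableAt ℝ (fun q : ℝ × ℝ => √(1 - q.2 ^ 2)) p :=
    DifferentiableAt.sqrt (by fun_prop) (by nlinarith [abs_mul_abs_self p.2, abs_nonneg p.2])
  have hu' : DifferentiableAt ℝ (fun q : ℝ × ℝ => q.1 * q.2 / radius c₀ q) p := by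
    simp only [div_eq_mul_inv]
    exact (by fun_prop : DifferentiableAt ℝ (fun q : ℝ × ℝ => q.1 * q.2) p).mul (hradius.inv hr)
  have h𝔥u := h𝔥.comp p hu'
  unfold normalizedF1
  simp only [div_eq_mul_inv]
  exact ((h𝔥u.const_mul 2).sub ((hsqrt.mul ((hradius.pow 2).add (by fun_prop))).mul
    ((hradius.pow 3).inv (pow_ne_zero 3 hr))))

theorem differentiableAt_helicoidalF1 (hC1 : ContDiffOn ℝ 1 𝔥 (Icc (-1) 1)) {p : ℝ × ℝ}
    (hr : radius c₀ p ≠ 0) (hy : |p.2| < 1) : DifferentiableAt ℝ (helicoidalF1 c₀ 𝔥) p := by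
  rw [funext (helicoidalF1_eq c₀ 𝔥)]
  exact ((differentiableAt_radius hr).pow 3).mul (differentiableAt_normalizedF1 hC1 hr hy)

theorem continuousOn_helicoidalF1 (hC1 : ContDiffOn ℝ 1 𝔥 (Icc (-1) 1)) :
    ContinuousOn (helicoidalF1 c₀ 𝔥) (Ioi 0 ×ˢ Ioo (-1) 1) := fun _ ⟨hx, hy⟩ =>
  (differentiableAt_helicoidalF1 hC1 (radius_pos hx).ne' (abs_lt.2 hy)).continuousAt
    |>.continuousWithinAt

theorem helicoidalF1_neg_snd (heven : ∀ t ∈ Icc (-1 : ℝ) 1, 𝔥 (-t) = 𝔥 t) {x y : ℝ}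
    (hy : |y| ≤ 1) : helicoidalF1 c₀ 𝔥 (x, -y) = helicoidalF1 c₀ 𝔥 (x, y) := by
  have hu : x * y / √(c₀ ^ 2 * y ^ 2 + x ^ 2) ∈ Icc (-1) 1 :=
    abs_le.1 ((abs_mul_div_radius_le c₀ (x, y)).trans hy)
  simp only [helicoidalF1, neg_sq, mul_neg, neg_div]
  rw [heven _ hu]

def nullcline (c₀ : ℝ) (𝔥 : ℝ → ℝ) : Set (ℝ × ℝ) :=
  {p | p ∈ Ioi 0 ×ˢ Ioo (-1) 1 ∧ helicoidalF1 c₀ 𝔥 p = 0}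

theorem mk_neg_mem_nullcline_iff (heven : ∀ t ∈ Icc (-1 : ℝ) 1, 𝔥 (-t) = 𝔥 t) (x y : ℝ) :
    (x, -y) ∈ nullcline c₀ 𝔥 ↔ (x, y) ∈ nullcline c₀ 𝔥 := by
  have hreflect : ∀ y, (x, y) ∈ nullcline c₀ 𝔥 → (x, -y) ∈ nullcline c₀ 𝔥 :=
    fun y ⟨⟨hx, hy⟩, hF⟩ => ⟨⟨hx, neg_mem_Ioo_iff.2 (by simpa using hy)⟩,
      (helicoidalF1_neg_snd heven (abs_lt.2 hy).le).trans hF⟩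
  exact ⟨fun h => neg_neg y ▸ hreflect (-y) h, hreflect y⟩

theorem radius_zero_left (c₀ y : ℝ) : radius c₀ (0, y) = |c₀ * y| := by
  simp [radius, ← mul_pow, Real.sqrt_sq_eq_abs]

theorem radius_zero_right (c₀ x : ℝ) : radius c₀ (x, 0) = |x| := by
  simp [radius, Real.sqrt_sq_eq_abs]

theorem helicoidalF1_zero_left (c₀ : ℝ) (𝔥 : ℝ → ℝ) (y : ℝ) :
    helicoidalF1 c₀ 𝔥 (0, y) = 2 * (c₀ * y) ^ 2 * (𝔥 0 * |c₀ * y| - √(1 - y ^ 2)) := by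
  rw [helicoidalF1, ← radius, rpow_three_halves_eq_radius_pow, radius_zero_left]
  simp only [zero_mul, zero_div]
  rw [pow_succ, sq_abs]
  ring

theorem helicoidalF1_zero_right (c₀ : ℝ) (𝔥 : ℝ → ℝ) {x : ℝ} (hx : 0 ≤ x) :
    helicoidalF1 c₀ 𝔥 (x, 0) = x ^ 2 * (2 * 𝔥 0 * x - 1) := by
  rw [helicoidalF1, ← radius, rpow_three_halves_eq_radius_pow, radius_zero_right,
    abs_of_nonneg hx]
  simp only [mul_zero, zero_div]
  norm_num
  ring

theorem mul_le_helicoidalF1_add (heven : ∀ t ∈ Icc (-1 : ℝ) 1, 𝔥 (-t) = 𝔥 t)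
    (hmono : MonotoneOn 𝔥 (Icc 0 1)) {x y t : ℝ} (hx : 0 < x) (hy : |y| ≤ 1) (ht : 0 ≤ t)
    (hG : normalizedF1 c₀ 𝔥 (x, y) = 0) :
    x * √(1 - y ^ 2) * t ≤ helicoidalF1 c₀ 𝔥 (x + t, y) := by
  have hr : 0 < radius c₀ (x, y) := radius_pos hx
  have hle : radius c₀ (x, y) ≤ radius c₀ (x + t, y) :=
    radius_le_radius hx.le (le_add_of_nonneg_right ht)
  have hG' := normalizedF1_sub_ge heven hmono hy hx.le (le_add_of_nonneg_right ht) hr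
  rw [hG, sub_zero] at hG'
  have hsq : radius c₀ (x + t, y) ^ 2 = radius c₀ (x, y) ^ 2 + 2 * x * t + t ^ 2 := by
    simp only [radius_sq]; ring
  set r := radius c₀ (x, y)
  set ρ := radius c₀ (x + t, y)
  have hρ : 0 < ρ := hr.trans_le hle
  have hgrowth : x * t ≤ ρ ^ 3 * (1 / r - 1 / ρ) := by
    rw [show ρ ^ 3 * (1 / r - 1 / ρ) = ρ * (ρ - r) * (ρ / r) by field_simp]
    calc x * t ≤ ρ * (ρ - r) := by nlinarith
      _ ≤ ρ * (ρ - r) * (ρ / r) :=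
        le_mul_of_one_le_right (by nlinarith) ((one_le_div hr).2 hle)
  rw [helicoidalF1_eq]
  calc x * √(1 - y ^ 2) * t = √(1 - y ^ 2) * (x * t) := by ring
    _ ≤ √(1 - y ^ 2) * (ρ ^ 3 * (1 / r - 1 / ρ)) := by gcongr
    _ = ρ ^ 3 * (√(1 - y ^ 2) * (1 / r - 1 / ρ)) := by ring
    _ ≤ ρ ^ 3 * normalizedF1 c₀ 𝔥 (x + t, y) := by gcongr

theorem fderiv_helicoidalF1_ne_zero (hC1 : ContDiffOn ℝ 1 𝔥 (Icc (-1) 1))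
    (heven : ∀ t ∈ Icc (-1 : ℝ) 1, 𝔥 (-t) = 𝔥 t) (hmono : MonotoneOn 𝔥 (Icc 0 1))
    {p : ℝ × ℝ} (hp : p ∈ Ioi 0 ×ˢ Ioo (-1) 1) (hF : helicoidalF1 c₀ 𝔥 p = 0) :
    fderiv ℝ (helicoidalF1 c₀ 𝔥) p ≠ 0 := by
  obtain ⟨x, y⟩ := p
  obtain ⟨hx : 0 < x, hy⟩ := hp
  have hr : 0 < radius c₀ (x, y) := radius_pos hx
  have hG : normalizedF1 c₀ 𝔥 (x, y) = 0 := by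
    rw [helicoidalF1_eq] at hF
    exact (mul_eq_zero.1 hF).resolve_left (pow_ne_zero 3 hr.ne')
  intro h0
  have hline : HasLineDerivAt ℝ (helicoidalF1 c₀ 𝔥) 0 (x, y) (1, 0) := by
    simpa [h0] using
      (differentiableAt_helicoidalF1 hC1 hr.ne' (abs_lt.2 hy)).hasFDerivAt.hasLineDerivAt (1, 0)
  have hk := hline.le_of_forall_mul_le fun t ht => by
    simpa [hF] using mul_le_helicoidalF1_add heven hmono hx (abs_lt.2 hy).le ht.le hG
  have hs : 0 < √(1 - y ^ 2) := Real.sqrt_pos.2 (by nlinarith [hy.1, hy.2])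
  exact (mul_pos hx hs).not_ge hk

theorem exists_isSignThresholdOn_helicoidalF1 (hC1 : ContDiffOn ℝ 1 𝔥 (Icc (-1) 1))
    (heven : ∀ t ∈ Icc (-1 : ℝ) 1, 𝔥 (-t) = 𝔥 t) (hmono : MonotoneOn 𝔥 (Icc 0 1))
    (h𝔥 : 0 < 𝔥 0) : ∃ g, IsSignThresholdOn (helicoidalF1 c₀ 𝔥) (Ioo (-1) 1) g := by
  have key : ∀ y ∈ Ioo (-1 : ℝ) 1,
      ∃ x₀, IsSignThreshold (fun x => helicoidalF1 c₀ 𝔥 (x, y)) x₀ := by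
    intro y hy
    have hy : |y| < 1 := abs_lt.2 hy
    have hcont : ContinuousOn (fun x => normalizedF1 c₀ 𝔥 (x, y)) (Ioi 0) := fun x hx =>
      ((differentiableAt_normalizedF1 hC1 (radius_pos hx).ne' hy).continuousAt.comp
        (f := fun x : ℝ => (x, y)) (by fun_prop)).continuousWithinAt
    have hmono' : StrictMonoOn (fun x => normalizedF1 c₀ 𝔥 (x, y)) (Ioi 0) :=
      fun x₁ hx₁ _ _ hx => normalizedF1_lt_normalizedF1 heven hmono hy (le_of_lt hx₁) hx
        (radius_pos hx₁)
    obtain ⟨x₀, hx₀⟩ := hmono'.exists_isSignThreshold hcont (b := 2 / 𝔥 0) (by positivity)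
      (normalizedF1_pos heven hmono hy.le (by positivity) (by field_simp; norm_num))
    refine ⟨x₀, ?_⟩
    simpa only [helicoidalF1_eq] using hx₀.mul_left fun x hx => pow_pos (radius_pos hx) 3
  choose! g hg using key
  exact ⟨g, hg⟩

theorem exists_helicoidalF1_neg_iff (hC1 : ContDiffOn ℝ 1 𝔥 (Icc (-1) 1))
    (heven : ∀ t ∈ Icc (-1 : ℝ) 1, 𝔥 (-t) = 𝔥 t) (hmono : MonotoneOn 𝔥 (Icc 0 1)) (hc₀ : c₀ ≠ 0)
    (h𝔥 : 0 < 𝔥 0) {y : ℝ} (hy : |y| < 1) :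
    (∃ x, 0 < x ∧ helicoidalF1 c₀ 𝔥 (x, y) < 0) ↔ |y| < 1 / √(1 + c₀ ^ 2 * 𝔥 0 ^ 2) := by
  rcases eq_or_ne y 0 with rfl | hy0
  · refine iff_of_true ⟨1 / (4 * 𝔥 0), by positivity, ?_⟩ (by simp; positivity)
    rw [helicoidalF1_zero_right c₀ 𝔥 (by positivity)]
    have : 2 * 𝔥 0 * (1 / (4 * 𝔥 0)) - 1 < 0 := by field_simp; norm_num
    exact mul_neg_of_pos_of_neg (by positivity) this
  have hcy : 0 < |c₀ * y| := abs_pos.2 (mul_ne_zero hc₀ hy0)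
  have hr : 0 < radius c₀ (0, y) := radius_zero_left c₀ y ▸ hcy
  have haxis : helicoidalF1 c₀ 𝔥 (0, y) < 0 ↔ |y| < 1 / √(1 + c₀ ^ 2 * 𝔥 0 ^ 2) := by
    have hsq : 0 < 2 * (c₀ * y) ^ 2 := by positivity
    rw [← mul_pow, abs_lt_one_div_sqrt_iff, helicoidalF1_zero_left,
      show |c₀ * 𝔥 0 * y| = 𝔥 0 * |c₀ * y| by rw [abs_mul, abs_mul, abs_mul, abs_of_pos h𝔥]; ring]
    exact (smul_neg_iff_of_pos_left hsq).trans sub_neg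
  rw [← haxis]
  constructor
  · rintro ⟨x, hx, hFx⟩
    by_contra h0
    have hG0 : 0 ≤ normalizedF1 c₀ 𝔥 (0, y) := by
      rw [helicoidalF1_eq, not_lt] at h0
      exact (mul_nonneg_iff_of_pos_left (pow_pos hr 3)).1 h0
    have hGx := hG0.trans_lt (normalizedF1_lt_normalizedF1 heven hmono hy le_rfl hx hr)
    rw [helicoidalF1_eq] at hFx
    exact hFx.not_gt (mul_pos (pow_pos (radius_pos hx) 3) hGx)
  · intro h0
    have hcont : ContinuousAt (fun x => helicoidalF1 c₀ 𝔥 (x, y)) 0 :=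
      (differentiableAt_helicoidalF1 hC1 hr.ne' hy).continuousAt.comp
        (f := fun x : ℝ => (x, y)) (by fun_prop)
    exact (((hcont.tendsto.mono_left nhdsWithin_le_nhds).eventually (gt_mem_nhds h0)).and
      (self_mem_nhdsWithin : Ioi (0 : ℝ) ∈ 𝓝[>] 0)).exists.imp fun x hx => ⟨hx.2, hx.1⟩

theorem setOf_threshold_pos_eq_Ioo (hC1 : ContDiffOn ℝ 1 𝔥 (Icc (-1) 1))
    (heven : ∀ t ∈ Icc (-1 : ℝ) 1, 𝔥 (-t) = 𝔥 t) (hmono : MonotoneOn 𝔥 (Icc 0 1)) (hc₀ : c₀ ≠ 0)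
    (h𝔥 : 0 < 𝔥 0) {g : ℝ → ℝ} (hg : IsSignThresholdOn (helicoidalF1 c₀ 𝔥) (Ioo (-1) 1) g) :
    {y ∈ Ioo (-1 : ℝ) 1 | 0 < g y} =
      Ioo (-(1 / √(1 + c₀ ^ 2 * 𝔥 0 ^ 2))) (1 / √(1 + c₀ ^ 2 * 𝔥 0 ^ 2)) := by
  ext y
  simp only [mem_ofPred_eq, mem_Ioo, ← abs_lt]
  constructor
  · rintro ⟨hy, hgy⟩
    exact (exists_helicoidalF1_neg_iff hC1 heven hmono hc₀ h𝔥 hy).1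
      ((hg y (abs_lt.1 hy)).pos_iff.1 hgy)
  · intro hy
    have hy' : |y| < 1 := hy.trans (one_div_sqrt_one_add_lt_one (by positivity))
    exact ⟨hy', (hg y (abs_lt.1 hy')).pos_iff.2
      ((exists_helicoidalF1_neg_iff hC1 heven hmono hc₀ h𝔥 hy').2 hy)⟩

end Helicoidal

open Helicoidal

theorem helicoidal_nullcline_connected (c₀ : ℝ) (hc₀ : c₀ ≠ 0) (𝔥 : ℝ → ℝ)
    (hC1 : ContDiffOn ℝ 1 𝔥 (Set.Icc (-1) 1))
    (hpos : ∀ t ∈ Set.Icc (-1 : ℝ) 1, 0 < 𝔥 t)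
    (heven : ∀ t ∈ Set.Icc (-1 : ℝ) 1, 𝔥 (-t) = 𝔥 t)
    (hmono : MonotoneOn 𝔥 (Set.Icc 0 1)) :
    let Θ₁ : Set (ℝ × ℝ) := Set.Ioi 0 ×ˢ Set.Ioo (-1) 1
    let Γ₁ : Set (ℝ × ℝ) := {p | p ∈ Θ₁ ∧ helicoidalF1 c₀ 𝔥 p = 0}
    let p₁ : ℝ × ℝ := (0, 1 / Real.sqrt (1 + c₀ ^ 2 * (𝔥 0) ^ 2))
    IsConnected Γ₁ ∧
    (∀ p ∈ Γ₁, fderiv ℝ (helicoidalF1 c₀ 𝔥) p ≠ 0) ∧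
    closure Γ₁ = Γ₁ ∪ {p₁, -p₁} ∧
    (∀ x y : ℝ, (x, y) ∈ Γ₁ ↔ (x, -y) ∈ Γ₁) ∧
    (∃ Λ₀ Λinf : Set (ℝ × ℝ),
      Θ₁ \ Γ₁ = Λ₀ ∪ Λinf ∧ Disjoint Λ₀ Λinf ∧
      IsConnected Λ₀ ∧ IsConnected Λinf ∧
      Bornology.IsBounded Λ₀ ∧ ¬ Bornology.IsBounded Λinf ∧
      (∃ y : ℝ, ((0 : ℝ), y) ∈ closure Λ₀)) := by
  intro Θ₁ Γ₁ p₁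
  have h𝔥 : 0 < 𝔥 0 := hpos 0 ⟨by norm_num, by norm_num⟩
  obtain ⟨g, hg⟩ := exists_isSignThresholdOn_helicoidalF1 (c₀ := c₀) hC1 heven hmono h𝔥
  have hgc := hg.continuousOn isOpen_Ioo (continuousOn_helicoidalF1 hC1)
  have hD := setOf_threshold_pos_eq_Ioo hC1 heven hmono hc₀ h𝔥 hg
  set y₁ := 1 / √(1 + c₀ ^ 2 * 𝔥 0 ^ 2)
  have hy₁ : 0 < y₁ := by positivity
  have hsub : Icc (-y₁) y₁ ⊆ Ioo (-1) 1 :=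
    have := one_div_sqrt_one_add_lt_one (a := c₀ ^ 2 * 𝔥 0 ^ 2) (by positivity)
    Icc_subset_Ioo (by linarith) this
  have hDconn : IsConnected {y ∈ Ioo (-1 : ℝ) 1 | 0 < g y} := hD ▸ isConnected_Ioo (by linarith)
  have hg0 : (0 : ℝ) ∈ {y ∈ Ioo (-1 : ℝ) 1 | 0 < g y} := hD ▸ ⟨neg_lt_zero.2 hy₁, hy₁⟩
  refine ⟨hg.isConnected_setOf_eq_zero hgc hDconn,
    fun p hp => fderiv_helicoidalF1_ne_zero hC1 heven hmono hp.1 hp.2, ?_,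
    fun x y => (mk_neg_mem_nullcline_iff heven x y).symm,
    {p | p ∈ Θ₁ ∧ helicoidalF1 c₀ 𝔥 p < 0}, {p | p ∈ Θ₁ ∧ 0 < helicoidalF1 c₀ 𝔥 p},
    diff_setOf_eq_zero Θ₁ _, disjoint_left.2 fun p h₁ h₂ => lt_asymm h₁.2 h₂.2,
    hg.isConnected_setOf_neg hgc hDconn,
    hg.isConnected_setOf_pos hgc (isConnected_Ioo (by norm_num)),
    hg.isBounded_setOf_neg hgc isCompact_Icc hsub (hD ▸ Ioo_subset_Icc_self),
    hg.not_isBounded_setOf_pos hg0.1, 0,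
    hg.mem_closure_setOf_neg hg0.1 hg0.2⟩
  rw [hg.closure_setOf_eq_zero hgc (by linarith) hsub hD, pair_comm]
  simp only [p₁, Prod.neg_mk, neg_zero]
  rfl
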